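/- arXiv:2408.07315 — 6 statements merged into one kernel-verified Lean document; each statement's English description precedes it below -/
import Mathlib

section
/- Let $R$ be a commutative ring, $m \geq 2$, and elements $x, V_1, \dots, V_m, I_2, \dots, I_m \in R$. Let $A$ be the $m \times m$ tridiagonal matrix with diagonal $(V_1 - x,\, I_2 + V_2 - x,\, \dots,\, I_m + V_m - x)$, superdiagonal all $1$, and subdiagonal $(I_2 V_1, I_3 V_2, \dots, I_m V_{m-1})$. Let $B$ be the $m \times m$ tridiagonal matrix with diagonal $(I_2 + V_1 - x,\, I_3 + V_2 - x,\, \dots,\, I_m + V_{m-1} - x,\, V_m - x)$, superdiagonal all $1$, and subdiagonal $(I_2 V_2, I_3 V_3, \dots, I_m V_m)$. Then $\det A = \det B$. -/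
/-- The `m × m` tridiagonal matrix with diagonal entries `d 0, …, d (m-1)`,
superdiagonal entries all `1`, and subdiagonal entries `c 0, …, c (m-2)`. -/
def tridiag {R : Type*} [CommRing R] (m : ℕ) (d : ℕ → R) (c : ℕ → R) :
    Matrix (Fin m) (Fin m) R :=
  Matrix.of fun i j =>
    if (i : ℕ) = j then d i
    else if (i : ℕ) + 1 = j then 1
    else if (j : ℕ) + 1 = i then c j
    else 0


section aux
variable {R : Type*} [CommRing R] (m : ℕ) (I V : ℕ → R)

def Lmat : Matrix (Fin m) (Fin m) R :=
  Matrix.of fun i k => if (i : ℕ) = k then 1 else if (k : ℕ) + 1 = i then I (k + 2) else 0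

def Umat : Matrix (Fin m) (Fin m) R :=
  Matrix.of fun k j => if (k : ℕ) = j then V (k + 1) else if (k : ℕ) + 1 = j then 1 else 0

lemma Lmat_mul_apply (M : Matrix (Fin m) (Fin m) R) (i j : Fin m) :
    (Lmat m I * M) i j = M i j +
      (if h : (i : ℕ) = 0 then 0 else I ((i : ℕ) + 1) * M ⟨(i : ℕ) - 1, by omega⟩ j) := by
  rw [Matrix.mul_apply]
  have hsplit : ∀ k : Fin m, Lmat m I i k * M k j =
      (if k = i then M k j else 0) +
      (if (k : ℕ) + 1 = (i : ℕ) then I ((k : ℕ) + 2) * M k j else 0) := by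
    intro k
    simp only [Lmat, Matrix.of_apply]
    rcases eq_or_ne k i with rfl | hne
    · rw [if_pos rfl, if_pos rfl, if_neg (by omega), one_mul, add_zero]
    · have h2 : ¬ ((i : ℕ) = (k : ℕ)) := fun h => hne (Fin.ext h.symm)
      rw [if_neg h2, if_neg hne, zero_add, ite_mul, zero_mul]
  rw [Finset.sum_congr rfl fun k _ => hsplit k, Finset.sum_add_distrib]
  congr 1
  · simp
  · rcases Nat.eq_zero_or_pos (i : ℕ) with h0 | hpos
    · rw [dif_pos h0]
      apply Finset.sum_eq_zero
      intro k _
      rw [if_neg]; omega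
    · have h0 : ¬ ((i : ℕ) = 0) := by omega
      rw [dif_neg h0]
      have hk : ((i : ℕ) - 1) < m := by have := i.isLt; omega
      rw [Finset.sum_eq_single (⟨(i : ℕ) - 1, hk⟩ : Fin m)]
      · simp only [Fin.val_mk]
        rw [if_pos (by omega)]
        congr 2
        omega
      · intro k _ hne
        have hv : (k : ℕ) ≠ (i : ℕ) - 1 := fun h => hne (Fin.ext h)
        have : ¬ ((k : ℕ) + 1 = (i : ℕ)) := by omega
        rw [if_neg this]
      · simp

lemma mul_Umat_apply (M : Matrix (Fin m) (Fin m) R) (i j : Fin m) :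
    (M * Umat m V) i j = V ((j : ℕ) + 1) * M i j +
      (if h : (j : ℕ) = 0 then 0 else M i ⟨(j : ℕ) - 1, by omega⟩) := by
  rw [Matrix.mul_apply]
  have hsplit : ∀ k : Fin m, M i k * Umat m V k j =
      (if k = j then V ((k : ℕ) + 1) * M i k else 0) +
      (if (k : ℕ) + 1 = (j : ℕ) then M i k else 0) := by
    intro k
    simp only [Umat, Matrix.of_apply]
    rcases eq_or_ne k j with rfl | hne
    · rw [if_pos rfl, if_pos rfl, if_neg (by omega), add_zero]; ring
    · have h2 : ¬ ((k : ℕ) = (j : ℕ)) := fun h => hne (Fin.ext h)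
      rw [if_neg h2, if_neg hne, zero_add, mul_ite, mul_zero, mul_one]
  rw [Finset.sum_congr rfl fun k _ => hsplit k, Finset.sum_add_distrib]
  congr 1
  · simp
  · rcases Nat.eq_zero_or_pos (j : ℕ) with h0 | hpos
    · rw [dif_pos h0]
      apply Finset.sum_eq_zero
      intro k _
      rw [if_neg]; omega
    · have h0 : ¬ ((j : ℕ) = 0) := by omega
      rw [dif_neg h0]
      have hk : ((j : ℕ) - 1) < m := by have := j.isLt; omega
      rw [Finset.sum_eq_single (⟨(j : ℕ) - 1, hk⟩ : Fin m)]
      · simp only [Fin.val_mk]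
        rw [if_pos (by omega)]
      · intro k _ hne
        have hv : (k : ℕ) ≠ (j : ℕ) - 1 := fun h => hne (Fin.ext h)
        have : ¬ ((k : ℕ) + 1 = (j : ℕ)) := by omega
        rw [if_neg this]
      · simp

end aux

section aux2
variable {R : Type*} [CommRing R] (m : ℕ) (I V : ℕ → R)

lemma mul_Lmat_apply (M : Matrix (Fin m) (Fin m) R) (i j : Fin m) :
    (M * Lmat m I) i j = M i j +
      (if h : (j : ℕ) + 1 < m then I ((j : ℕ) + 2) * M i ⟨(j : ℕ) + 1, h⟩ else 0) := by
  rw [Matrix.mul_apply]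
  have hsplit : ∀ k : Fin m, M i k * Lmat m I k j =
      (if k = j then M i k else 0) +
      (if (k : ℕ) = (j : ℕ) + 1 then I ((j : ℕ) + 2) * M i k else 0) := by
    intro k
    simp only [Lmat, Matrix.of_apply]
    rcases eq_or_ne k j with rfl | hne
    · rw [if_pos rfl, if_pos rfl, if_neg (by omega), mul_one, add_zero]
    · have h2 : ¬ ((k : ℕ) = (j : ℕ)) := fun h => hne (Fin.ext h)
      rw [if_neg h2, if_neg hne, zero_add, mul_ite, mul_zero]
      split_ifs with h3 h4 h4
      · ring
      · omega
      · omega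
      · rfl
  rw [Finset.sum_congr rfl fun k _ => hsplit k, Finset.sum_add_distrib]
  congr 1
  · simp
  · rcases lt_or_ge ((j : ℕ) + 1) m with hlt | hge
    · rw [dif_pos hlt]
      rw [Finset.sum_eq_single (⟨(j : ℕ) + 1, hlt⟩ : Fin m)]
      · simp
      · intro k _ hne
        have hv : (k : ℕ) ≠ (j : ℕ) + 1 := fun h => hne (Fin.ext h)
        rw [if_neg hv]
      · simp
    · rw [dif_neg (by omega)]
      apply Finset.sum_eq_zero
      intro k _
      rw [if_neg]
      have := k.isLt; omega

lemma keyA (x : R) :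
    Lmat m I * Umat m V =
      tridiag m (fun i => if i = 0 then V 1 - x else I (i + 1) + V (i + 1) - x)
        (fun j => I (j + 2) * V (j + 1)) + x • (1 : Matrix (Fin m) (Fin m) R) := by
  ext i j
  have hi := i.isLt
  have hj := j.isLt
  rw [Lmat_mul_apply]
  simp only [tridiag, Umat, Matrix.of_apply, Matrix.add_apply, Matrix.smul_apply,
    Matrix.one_apply, smul_eq_mul, Fin.val_mk, Fin.ext_iff]
  split_ifs <;> try omega
  all_goals try ring
  all_goals (first | (congr 1 <;> omega) | (congr 1 <;> first | omega | (congr 1 <;> omega)))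

lemma keyB (x : R) :
    Umat m V * Lmat m I =
      tridiag m (fun i => if i = m - 1 then V m - x else I (i + 2) + V (i + 1) - x)
        (fun j => I (j + 2) * V (j + 2)) + x • (1 : Matrix (Fin m) (Fin m) R) := by
  ext i j
  have hi := i.isLt
  have hj := j.isLt
  rw [mul_Lmat_apply]
  simp only [tridiag, Umat, Matrix.of_apply, Matrix.add_apply, Matrix.smul_apply,
    Matrix.one_apply, smul_eq_mul, Fin.val_mk, Fin.ext_iff]
  split_ifs <;> try omega
  all_goals try ring
  all_goals (first | (congr 1 <;> omega) | (congr 1 <;> first | omega | (congr 1 <;> omega)))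

end aux2

lemma det_Lmat {R : Type*} [CommRing R] (m : ℕ) (I : ℕ → R) : (Lmat m I).det = 1 := by
  rw [Matrix.det_of_lowerTriangular (Lmat m I)]
  · apply Finset.prod_eq_one
    intro i _
    simp [Lmat]
  · intro i j hij
    simp only [Lmat, Matrix.of_apply]
    rw [if_neg (by simp at hij; omega), if_neg (by simp at hij; omega)]

/-- Key combinatorial identity (Lemma 2.9 of the paper):
`A` has diagonal `(V₁-x, I₂+V₂-x, …, I_m+V_m-x)` and subdiagonal `(I₂V₁, …, I_m V_{m-1})`,
`B` has diagonal `(I₂+V₁-x, …, I_m+V_{m-1}-x, V_m-x)` and subdiagonal `(I₂V₂, …, I_m V_m)`;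
both have superdiagonal all `1`, and `det A = det B`. -/
theorem stmt_2 {R : Type*} [CommRing R] (m : ℕ) (hm : 2 ≤ m)
    (x : R) (I V : ℕ → R) :
    (tridiag m (fun i => if i = 0 then V 1 - x else I (i + 1) + V (i + 1) - x)
      (fun j => I (j + 2) * V (j + 1))).det =
    (tridiag m (fun i => if i = m - 1 then V m - x else I (i + 2) + V (i + 1) - x)
      (fun j => I (j + 2) * V (j + 2))).det := by
  set A := tridiag m (fun i => if i = 0 then V 1 - x else I (i + 1) + V (i + 1) - x)
      (fun j => I (j + 2) * V (j + 1)) with hAdef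
  set B := tridiag m (fun i => if i = m - 1 then V m - x else I (i + 2) + V (i + 1) - x)
      (fun j => I (j + 2) * V (j + 2)) with hBdef
  have hA : A = Lmat m I * Umat m V - x • 1 := by
    have h := keyA m I V x
    rw [← hAdef] at h
    rw [h]; abel
  have hB : B = Umat m V * Lmat m I - x • 1 := by
    have h := keyB m I V x
    rw [← hBdef] at h
    rw [h]; abel
  have hcomm : A * Lmat m I = Lmat m I * B := by
    rw [hA, hB, Matrix.sub_mul, Matrix.mul_sub, Matrix.smul_mul, Matrix.mul_smul,
      Matrix.one_mul, Matrix.mul_one, Matrix.mul_assoc]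
  calc A.det = A.det * (Lmat m I).det := by rw [det_Lmat, mul_one]
    _ = (A * Lmat m I).det := (Matrix.det_mul _ _).symm
    _ = (Lmat m I * B).det := by rw [hcomm]
    _ = (Lmat m I).det * B.det := Matrix.det_mul _ _
    _ = B.det := by rw [det_Lmat, one_mul]
end

section
/- Let $R$ be a commutative ring and let $T$ be an $n \times n$ tridiagonal matrix ($n \geq 2$) with superdiagonal entries all equal to $1$ and subdiagonal entries $b_1, \dots, b_{n-1}$. Denote by $T^{(i)}$ the matrix obtained by deleting row $i$ and column $i$, and by $T^{(1,n)}$ the matrix obtained by deleting rows and columns $1$ and $n$. Then $\det(T^{(1)}) \cdot \det(T^{(n)}) - \det(T) \cdot \det(T^{(1,n)}) = b_1 b_2 \cdots b_{n-1}$. -/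
section
variable {R : Type*} [CommRing R]

lemma tridiag_submatrix_of_val_eq_add {p q : ℕ} (s : ℕ) (d c : ℕ → R) (e f : Fin p → Fin q)
    (he : ∀ k, (e k : ℕ) = k + s) (hf : ∀ k, (f k : ℕ) = k + s) :
    (tridiag q d c).submatrix e f = tridiag p (fun i => d (i + s)) (fun i => c (i + s)) := by
  ext i j
  simp only [tridiag, Matrix.submatrix_apply, Matrix.of_apply, he, hf]
  split_ifs <;> first | rfl | omega

lemma tridiag_submatrix_of_val_eq {p q : ℕ} (d c : ℕ → R) (e f : Fin p → Fin q)
    (he : ∀ k, (e k : ℕ) = k) (hf : ∀ k, (f k : ℕ) = k) :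
    (tridiag q d c).submatrix e f = tridiag p d c :=
  tridiag_submatrix_of_val_eq_add 0 d c e f he hf

lemma tridiag_apply_eq_zero {m : ℕ} (d c : ℕ → R) {i j : Fin m} (h₀ : (i : ℕ) ≠ j)
    (h₁ : (i : ℕ) + 1 ≠ j) (h₂ : (j : ℕ) + 1 ≠ i) : tridiag m d c i j = 0 := by
  simp only [tridiag, Matrix.of_apply]
  split_ifs <;> first | rfl | omega

lemma det_tridiag_submatrix_succAbove_last_castSucc (m : ℕ) (d c : ℕ → R) :
    ((tridiag (m + 2) d c).submatrix (Fin.last (m + 1)).succAbove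
      (Fin.last m).castSucc.succAbove).det = (tridiag m d c).det := by
  set M := (tridiag (m + 2) d c).submatrix (Fin.last (m + 1)).succAbove
    (Fin.last m).castSucc.succAbove
  -- The last column of `M` is column `m + 1` of `T` without its last entry: only the
  -- superdiagonal `1` in row `m` survives.
  have hcol : ∀ i ≠ Fin.last m, M i (Fin.last m) = 0 := fun i hi => by
    have := Fin.val_lt_last hi
    apply tridiag_apply_eq_zero <;> simp [Fin.succAbove] <;> omega
  have hcorner : M (Fin.last m) (Fin.last m) = 1 := by
    simp [M, tridiag, Fin.succAbove]
  have hminor : M.submatrix (Fin.last m).succAbove (Fin.last m).succAbove = tridiag m d c := by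
    apply tridiag_submatrix_of_val_eq <;> intro k <;> simp [Fin.succAbove]
  rw [Matrix.det_succ_column M (Fin.last m),
    Fintype.sum_eq_single (Fin.last m) fun i hi => by rw [hcol i hi, mul_zero, zero_mul],
    hcorner, hminor, Fin.val_last, ← two_mul, pow_mul, neg_one_sq, one_pow, one_mul, one_mul]

lemma det_tridiag_add_two (m : ℕ) (d c : ℕ → R) :
    (tridiag (m + 2) d c).det =
      d (m + 1) * (tridiag (m + 1) d c).det - c m * (tridiag m d c).det := by
  have hrow : ∀ j, j ≠ Fin.last (m + 1) ∧ j ≠ (Fin.last m).castSucc →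
      tridiag (m + 2) d c (Fin.last (m + 1)) j = 0 := fun j ⟨hj₁, hj₂⟩ => by
    have : (j : ℕ) ≠ m + 1 := fun h => hj₁ (Fin.ext h)
    have : (j : ℕ) ≠ m := fun h => hj₂ (Fin.ext h)
    apply tridiag_apply_eq_zero <;> simp <;> omega
  have hminor : (tridiag (m + 2) d c).submatrix (Fin.last (m + 1)).succAbove
      (Fin.last (m + 1)).succAbove = tridiag (m + 1) d c := by
    apply tridiag_submatrix_of_val_eq <;> simp
  rw [Matrix.det_succ_row _ (Fin.last (m + 1)),
    Fintype.sum_eq_add _ _ (Fin.ne_of_gt (Fin.castSucc_lt_last _)) fun j hj => by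
      rw [hrow j hj, mul_zero, zero_mul],
    hminor, det_tridiag_submatrix_succAbove_last_castSucc]
  have hdiag : tridiag (m + 2) d c (Fin.last (m + 1)) (Fin.last (m + 1)) = d (m + 1) := by
    simp [tridiag]
  have hsub : tridiag (m + 2) d c (Fin.last (m + 1)) (Fin.last m).castSucc = c m := by
    simp [tridiag, show m + 1 + 1 ≠ m by omega]
  rw [hdiag, hsub, Fin.val_castSucc, Fin.val_last, Fin.val_last,
    Even.neg_one_pow ⟨m + 1, rfl⟩, Odd.neg_one_pow ⟨m, by ring⟩]
  ring

lemma det_tridiag_desnanot_jacobi (a b : ℕ → R) (m : ℕ) :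
    (tridiag (m + 1) (fun i => a (i + 1)) (fun i => b (i + 1))).det * (tridiag (m + 1) a b).det -
      (tridiag (m + 2) a b).det * (tridiag m (fun i => a (i + 1)) (fun i => b (i + 1))).det =
      ∏ i ∈ Finset.range (m + 1), b i := by
  induction m with
  | zero =>
    rw [det_tridiag_add_two]
    simp [tridiag]
  | succ m ih =>
    rw [det_tridiag_add_two (m + 1) a b, det_tridiag_add_two m (fun i => a (i + 1)),
      Finset.prod_range_succ]
    linear_combination b (m + 1) * ih

end

/-- Desnanot–Jacobi-type identity for tridiagonal matrices with superdiagonal `1`: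
`det T⁽¹⁾ · det T⁽ⁿ⁾ − det T · det T⁽¹'ⁿ⁾ = b₁ ⋯ b_{n-1}`, where `T⁽¹⁾` deletes the
first row and column, `T⁽ⁿ⁾` the last, and `T⁽¹'ⁿ⁾` both. -/
theorem stmt_3 {R : Type*} [CommRing R] (n : ℕ) (hn : 2 ≤ n) (a b : ℕ → R) :
    ((tridiag n a b).submatrix
        (fun k : Fin (n - 1) => (⟨(k : ℕ) + 1, by have := k.isLt; omega⟩ : Fin n))
        (fun k : Fin (n - 1) => (⟨(k : ℕ) + 1, by have := k.isLt; omega⟩ : Fin n))).det *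
    ((tridiag n a b).submatrix
        (fun k : Fin (n - 1) => (⟨(k : ℕ), by have := k.isLt; omega⟩ : Fin n))
        (fun k : Fin (n - 1) => (⟨(k : ℕ), by have := k.isLt; omega⟩ : Fin n))).det -
    (tridiag n a b).det *
    ((tridiag n a b).submatrix
        (fun k : Fin (n - 2) => (⟨(k : ℕ) + 1, by have := k.isLt; omega⟩ : Fin n))
        (fun k : Fin (n - 2) => (⟨(k : ℕ) + 1, by have := k.isLt; omega⟩ : Fin n))).det =
    ∏ i ∈ Finset.range (n - 1), b i := by
  obtain ⟨m, rfl⟩ : ∃ m, n = m + 2 := ⟨n - 2, by omega⟩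
  rw [tridiag_submatrix_of_val_eq_add 1 a b, tridiag_submatrix_of_val_eq a b,
    tridiag_submatrix_of_val_eq_add 1 a b]
  · exact det_tridiag_desnanot_jacobi a b m
  all_goals exact fun _ => rfl
end

section
/- Let $K$ be a field, $n \geq 3$, and let $L(z)$ be the periodic Jacobi matrix over $K(z)$ as above, associated to parameters $(I_1, \dots, I_n, V_1, \dots, V_n) \in K^{2n}$. Let $\sigma(L)(z)$ be the periodic Jacobi matrix associated to the cyclically shifted parameters $(I_2, \dots, I_n, I_1, V_2, \dots, V_n, V_1)$. Then $\det(L(z) - x E_n) = \det(\sigma(L)(z) - x E_n)$ in $K(z)[x]$. -/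
open Polynomial

/-- The `n × n` periodic Jacobi matrix over `K(z)` (here `z = RatFunc.X`), with diagonal
`(I₁+Vₙ, I₂+V₁, …, Iₙ+Vₙ₋₁)`, superdiagonal all `1`, subdiagonal `(I₁V₁, …, Iₙ₋₁Vₙ₋₁)`,
entry `IₙVₙ/z` at position `(1, n)` and entry `z` at position `(n, 1)`. -/
noncomputable def pJac (K : Type*) [Field K] (n : ℕ) (I V : ℕ → K) :
    Matrix (Fin n) (Fin n) (RatFunc K) :=
  Matrix.of fun i j =>
    if (i : ℕ) = j then RatFunc.C (I ((i : ℕ) + 1) + V (if (i : ℕ) = 0 then n else (i : ℕ)))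
    else if (i : ℕ) + 1 = j then 1
    else if (j : ℕ) + 1 = i then RatFunc.C (I ((j : ℕ) + 1) * V ((j : ℕ) + 1))
    else if (i : ℕ) = 0 ∧ (j : ℕ) = n - 1 then RatFunc.C (I n * V n) / RatFunc.X
    else if (i : ℕ) = n - 1 ∧ (j : ℕ) = 0 then RatFunc.X
    else 0

set_option maxHeartbeats 4000000 in
lemma pJac_shift_entry {K : Type*} [Field K] {n : ℕ} (hn : 3 ≤ n) (I V : ℕ → K)
    [NeZero n] (i j : Fin n) :
    (if (i:ℕ) = n - 1 then (RatFunc.X : RatFunc K)⁻¹ else 1) *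
      pJac K n (fun k => if k = n then I 1 else I (k+1)) (fun k => if k = n then V 1 else V (k+1)) i j
    = pJac K n I V (i+1) (j+1) * (if (j:ℕ) = n - 1 then (RatFunc.X : RatFunc K)⁻¹ else 1) := by
  have hi := i.isLt
  have hj := j.isLt
  have hXne : (RatFunc.X : RatFunc K) ≠ 0 := RatFunc.X_ne_zero
  have h : ((1 : Fin n) : ℕ) = 1 % n := Fin.val_one' n
  have h1 : 1 % n = 1 := Nat.mod_eq_of_lt (by omega)
  rcases Nat.lt_or_ge (i:ℕ) (n-1) with ha | ha
  · have ha1 : ((i + 1 : Fin n) : ℕ) = (i:ℕ) + 1 := by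
      rw [Fin.val_add, h, h1]; exact Nat.mod_eq_of_lt (by omega)
    rcases Nat.lt_or_ge (j:ℕ) (n-1) with hb | hb
    · have hb1 : ((j + 1 : Fin n) : ℕ) = (j:ℕ) + 1 := by
        rw [Fin.val_add, h, h1]; exact Nat.mod_eq_of_lt (by omega)
      simp only [pJac, Matrix.of_apply, ha1, hb1]
      split_ifs <;>
        first
          | rfl
          | (exfalso; omega)
          | (rw [one_mul, mul_one]; congr 3 <;> omega)
          | (simp_all; done)
          | (rw [mul_one, div_eq_mul_inv, mul_comm]; congr 4 <;> omega)
          | (rw [one_mul, div_eq_mul_inv]; congr 4 <;> omega)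
          | (field_simp; done)
          | (field_simp; congr 4 <;> omega)
    · have hb : (j:ℕ) = n - 1 := by omega
      have hb1 : ((j + 1 : Fin n) : ℕ) = 0 := by
        rw [Fin.val_add, h, h1, show (j:ℕ) + 1 = n from by omega, Nat.mod_self]
      simp only [pJac, Matrix.of_apply, ha1, hb1]
      split_ifs <;>
        first
          | rfl
          | (exfalso; omega)
          | (rw [one_mul, mul_one]; congr 3 <;> omega)
          | (simp_all; done)
          | (rw [mul_one, div_eq_mul_inv, mul_comm]; congr 4 <;> omega)
          | (rw [one_mul, div_eq_mul_inv]; congr 4 <;> omega)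
          | (field_simp; done)
          | (field_simp; congr 4 <;> omega)
  · have ha : (i:ℕ) = n - 1 := by omega
    have ha1 : ((i + 1 : Fin n) : ℕ) = 0 := by
      rw [Fin.val_add, h, h1, show (i:ℕ) + 1 = n from by omega, Nat.mod_self]
    rcases Nat.lt_or_ge (j:ℕ) (n-1) with hb | hb
    · have hb1 : ((j + 1 : Fin n) : ℕ) = (j:ℕ) + 1 := by
        rw [Fin.val_add, h, h1]; exact Nat.mod_eq_of_lt (by omega)
      simp only [pJac, Matrix.of_apply, ha1, hb1]
      split_ifs <;>
        first
          | rfl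
          | (exfalso; omega)
          | (rw [one_mul, mul_one]; congr 3 <;> omega)
          | (simp_all; done)
          | (rw [mul_one, div_eq_mul_inv, mul_comm]; congr 4 <;> omega)
          | (rw [one_mul, div_eq_mul_inv]; congr 4 <;> omega)
          | (field_simp; done)
          | (field_simp; congr 4 <;> omega)
    · have hb : (j:ℕ) = n - 1 := by omega
      have hb1 : ((j + 1 : Fin n) : ℕ) = 0 := by
        rw [Fin.val_add, h, h1, show (j:ℕ) + 1 = n from by omega, Nat.mod_self]
      simp only [pJac, Matrix.of_apply, ha1, hb1]
      split_ifs <;>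
        first
          | rfl
          | (exfalso; omega)
          | (rw [one_mul, mul_one]; congr 3 <;> omega)
          | (simp_all; done)
          | (rw [mul_one, div_eq_mul_inv, mul_comm]; congr 4 <;> omega)
          | (rw [one_mul, div_eq_mul_inv]; congr 4 <;> omega)
          | (field_simp; done)
          | (field_simp; congr 4 <;> omega)


/-- The cyclic shift `σ : (Iᵢ, Vᵢ) ↦ (Iᵢ₊₁, Vᵢ₊₁)` (indices mod `n`) preserves the
characteristic polynomial of the periodic Jacobi matrix (Lemma 2.2 of the paper). -/
theorem stmt_12 {K : Type*} [Field K] (n : ℕ) (hn : 3 ≤ n) (I V : ℕ → K) :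
    ((pJac K n I V).map (C : RatFunc K →+* Polynomial (RatFunc K)) -
        (X : Polynomial (RatFunc K)) • (1 : Matrix (Fin n) (Fin n) (Polynomial (RatFunc K)))).det
    = ((pJac K n (fun i => if i = n then I 1 else I (i + 1))
          (fun i => if i = n then V 1 else V (i + 1))).map
            (C : RatFunc K →+* Polynomial (RatFunc K)) -
        (X : Polynomial (RatFunc K)) •
          (1 : Matrix (Fin n) (Fin n) (Polynomial (RatFunc K)))).det := by
  haveI : NeZero n := ⟨by omega⟩
  classical
  set A := pJac K n I V with hA
  set B := pJac K n (fun i => if i = n then I 1 else I (i + 1))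
      (fun i => if i = n then V 1 else V (i + 1)) with hB
  set d : Fin n → RatFunc K := fun i => if (i:ℕ) = n - 1 then (RatFunc.X : RatFunc K)⁻¹ else 1
    with hd
  have hdne : ∀ i, d i ≠ 0 := by
    intro i
    simp only [hd]
    split
    · exact inv_ne_zero RatFunc.X_ne_zero
    · exact one_ne_zero
  have key : ∀ i j : Fin n, d i * B i j = A (i + 1) (j + 1) * d j := fun i j =>
    pJac_shift_entry hn I V i j
  set D : Matrix (Fin n) (Fin n) (Polynomial (RatFunc K)) :=
    Matrix.diagonal (fun i => C (d i)) with hD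
  set e : Equiv.Perm (Fin n) := Equiv.addRight (1 : Fin n) with he
  set Ax := A.map (C : RatFunc K →+* Polynomial (RatFunc K)) -
      (X : Polynomial (RatFunc K)) • (1 : Matrix (Fin n) (Fin n) (Polynomial (RatFunc K)))
    with hAx
  set Bx := B.map (C : RatFunc K →+* Polynomial (RatFunc K)) -
      (X : Polynomial (RatFunc K)) • (1 : Matrix (Fin n) (Fin n) (Polynomial (RatFunc K)))
    with hBx
  have hcomm : D * Bx = (Ax.submatrix e e) * D := by
    ext i j
    rw [Matrix.mul_apply, Matrix.mul_apply]
    rw [Finset.sum_eq_single i (fun k _ hk => by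
        simp [hD, Matrix.diagonal_apply_ne' _ hk]) (by simp)]
    rw [Finset.sum_eq_single j (fun k _ hk => by
        simp [hD, Matrix.diagonal_apply_ne _ hk]) (by simp)]
    simp only [hD, Matrix.diagonal_apply_eq, hAx, hBx, Matrix.sub_apply, Matrix.map_apply,
      Matrix.smul_apply, Matrix.one_apply, Matrix.submatrix_apply, he, Equiv.coe_addRight,
      smul_eq_mul]
    rw [mul_sub, sub_mul, ← map_mul, key i j, map_mul]
    congr 1
    by_cases hij' : i = j
    · subst hij'
      rw [if_pos rfl, if_pos rfl]
      ring
    · have h2 : ¬ (i + 1 = j + 1) := by simpa using hij'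
      rw [if_neg hij', if_neg h2]
      ring
  have hdetD : D.det ≠ 0 := by
    rw [hD, Matrix.det_diagonal]
    exact Finset.prod_ne_zero_iff.mpr fun i _ => by
      simpa using hdne i
  have hdet := congrArg Matrix.det hcomm
  rw [Matrix.det_mul, Matrix.det_mul, Matrix.det_submatrix_equiv_self, mul_comm] at hdet
  exact (mul_right_cancel₀ hdetD hdet).symm
end

section
/- Let $K$ be a field, $n \geq 3$, $I_1, \dots, I_n, V_1, \dots, V_n \in K$, and let $\mathcal{L} = L(z) - x E_n$ over $K(z)[x]$ be the characteristic matrix of the periodic Jacobi matrix. Let $u(x) = (-1)^{n-1} \det(\mathcal{L}_1)$ and $v(x) = (-1)^{n-1} I_n V_n \det({}^1\mathcal{L}_1)$, where $\mathcal{L}_1$ deletes the last row and column, and ${}^1\mathcal{L}_1$ deletes the first and last rows and columns. Then $(-1)^n I_1 I_2 \cdots I_n - v(0) = -I_n \cdot u(0)$. -/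
/-!
At `x = 0` the blocks `𝓛₁` and `¹𝓛₁` no longer involve `z`: `𝓛₁(0)` is the tridiagonal matrix
`J` with diagonal `I₁ + Vₙ, I₂ + V₁, …`, and `¹𝓛₁(0)` is `J` with its first row and column removed.
Up to its `(1,1)` entry, `J` is the product of the unit lower bidiagonal matrix with subdiagonal
`V₁, V₂, …` and the upper bidiagonal matrix with diagonal `I₁, …, Iₙ₋₁` and superdiagonal `1`; the
missing summand is `Vₙ`. Expanding the determinant along the first row therefore gives
`det J = I₁ ⋯ Iₙ₋₁ + Vₙ · det ¹𝓛₁(0)`, which is the claim after multiplying by `(-1)ⁿ Iₙ`.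
-/

open Polynomial

/-- The characteristic matrix `𝓛 = L(z) − x Eₙ` over `K(z)[x]`. -/
noncomputable def charMat (K : Type*) [Field K] (n : ℕ) (I V : ℕ → K) :
    Matrix (Fin n) (Fin n) (Polynomial (RatFunc K)) :=
  (pJac K n I V).map (C : RatFunc K →+* Polynomial (RatFunc K)) -
    (X : Polynomial (RatFunc K)) • 1

/-- `u(x) = (−1)^{n−1} det 𝓛₁` (delete last row and column). -/
noncomputable def uPoly (K : Type*) [Field K] (n : ℕ) (I V : ℕ → K) :
    Polynomial (RatFunc K) :=
  (-1) ^ (n - 1) *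
    ((charMat K n I V).submatrix
      (fun k : Fin (n - 1) => (⟨(k : ℕ), by have := k.isLt; omega⟩ : Fin n))
      (fun k : Fin (n - 1) => (⟨(k : ℕ), by have := k.isLt; omega⟩ : Fin n))).det

/-- `v(x) = (−1)^{n−1} Iₙ Vₙ det(¹𝓛₁)` (delete first and last rows and columns). -/
noncomputable def vPoly (K : Type*) [Field K] (n : ℕ) (I V : ℕ → K) :
    Polynomial (RatFunc K) :=
  (-1) ^ (n - 1) * C (RatFunc.C (I n * V n)) *
    ((charMat K n I V).submatrix
      (fun k : Fin (n - 2) => (⟨(k : ℕ) + 1, by have := k.isLt; omega⟩ : Fin n))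
      (fun k : Fin (n - 2) => (⟨(k : ℕ) + 1, by have := k.isLt; omega⟩ : Fin n))).det

namespace Matrix

variable {R : Type*} [CommRing R]

theorem add_single_zero_zero_submatrix_succ {m k : ℕ} (A : Matrix (Fin (m + 1)) (Fin (m + 1)) R)
    (c : R) (g : Fin k → Fin (m + 1)) :
    (A + single 0 0 c).submatrix Fin.succ g = A.submatrix Fin.succ g := by
  ext i j
  simp [single_apply_of_row_ne (Fin.succ_ne_zero i).symm]

theorem det_add_single_zero_zero {m : ℕ} (A : Matrix (Fin (m + 1)) (Fin (m + 1)) R) (c : R) :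
    (A + single 0 0 c).det = A.det + c * (A.submatrix Fin.succ Fin.succ).det := by
  simp only [det_succ_row_zero A, det_succ_row_zero (A + single 0 0 c),
    add_single_zero_zero_submatrix_succ, add_apply, add_mul, mul_add, Finset.sum_add_distrib]
  rw [add_right_inj, Finset.sum_eq_single 0]
  · simp [single_apply_same]
  · intro j _ hj
    simp [single_apply_of_col_ne _ _ (Ne.symm hj)]
  · simp

def tridiagJacobi (m : ℕ) (a b : ℕ → R) : Matrix (Fin m) (Fin m) R :=
  of fun i j =>
    if (i : ℕ) = j then a i + b i
    else if (i : ℕ) + 1 = j then 1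
    else if (j : ℕ) + 1 = i then a j * b i
    else 0

def unitLowerBidiag (m : ℕ) (b : ℕ → R) : Matrix (Fin m) (Fin m) R :=
  of fun i j => if (i : ℕ) = j then 1 else if (j : ℕ) + 1 = i then b i else 0

def upperBidiag (m : ℕ) (a : ℕ → R) : Matrix (Fin m) (Fin m) R :=
  of fun i j => if (i : ℕ) = j then a i else if (i : ℕ) + 1 = j then 1 else 0

theorem det_unitLowerBidiag (m : ℕ) (b : ℕ → R) : (unitLowerBidiag m b).det = 1 := by
  rw [det_of_isLowerTriangular]
  · simp [unitLowerBidiag]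
  · intro i j hij
    have : (i : ℕ) < j := hij
    simp only [unitLowerBidiag, of_apply]
    split_ifs <;> first | rfl | omega

theorem det_upperBidiag (m : ℕ) (a : ℕ → R) :
    (upperBidiag m a).det = ∏ i ∈ Finset.range m, a i := by
  rw [det_of_isUpperTriangular, ← Fin.prod_univ_eq_prod_range]
  · simp [upperBidiag]
  · intro i j hij
    have : (j : ℕ) < i := hij
    simp only [upperBidiag, of_apply]
    split_ifs <;> first | rfl | omega

theorem unitLowerBidiag_mul_upperBidiag (m : ℕ) (a b : ℕ → R) :
    unitLowerBidiag (m + 1) b * upperBidiag (m + 1) a + single 0 0 (b 0) =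
      tridiagJacobi (m + 1) a b := by
  ext i j
  rw [add_apply, mul_apply]
  cases i using Fin.cases with
  | zero =>
    rw [Fintype.sum_eq_single 0]
    · simp only [unitLowerBidiag, upperBidiag, tridiagJacobi, single_apply, of_apply, Fin.ext_iff,
        Fin.val_zero]
      split_ifs <;> first | omega | simp_all
    · intro k hk
      have : (k : ℕ) ≠ 0 := Fin.val_ne_zero_iff.mpr hk
      simp [unitLowerBidiag, this, Ne.symm this]
  | succ p =>
    rw [Fintype.sum_eq_add p.castSucc p.succ Fin.castSucc_lt_succ.ne]
    · simp only [unitLowerBidiag, upperBidiag, tridiagJacobi, single_apply, of_apply, Fin.ext_iff,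
        Fin.val_zero, Fin.val_succ, Fin.val_castSucc]
      split_ifs <;> first | omega | simp_all <;> ring
    · intro k hk
      have h1 : (k : ℕ) ≠ p := fun h => hk.1 (Fin.ext h)
      have h2 : (k : ℕ) ≠ p + 1 := fun h => hk.2 (Fin.ext h)
      simp only [unitLowerBidiag, of_apply, Fin.val_succ, Nat.add_right_cancel_iff, ite_mul,
        one_mul, zero_mul]
      split_ifs <;> first | rfl | omega

theorem tridiagJacobi_submatrix_succ (m : ℕ) (a b : ℕ → R) :
    (tridiagJacobi (m + 1) a b).submatrix Fin.succ Fin.succ =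
      tridiagJacobi m (fun i => a (i + 1)) (fun i => b (i + 1)) := by
  ext i j
  simp only [tridiagJacobi, submatrix_apply, of_apply, Fin.val_succ]
  split_ifs <;> first | rfl | omega

theorem det_tridiagJacobi_succ (m : ℕ) (a b : ℕ → R) :
    (tridiagJacobi (m + 1) a b).det =
      b 0 * (tridiagJacobi m (fun i => a (i + 1)) (fun i => b (i + 1))).det +
        ∏ i ∈ Finset.range (m + 1), a i := by
  have minor : (unitLowerBidiag (m + 1) b * upperBidiag (m + 1) a).submatrix Fin.succ Fin.succ =
      tridiagJacobi m (fun i => a (i + 1)) (fun i => b (i + 1)) := by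
    rw [← tridiagJacobi_submatrix_succ, ← unitLowerBidiag_mul_upperBidiag,
      add_single_zero_zero_submatrix_succ]
  rw [← unitLowerBidiag_mul_upperBidiag, det_add_single_zero_zero, minor, det_mul,
    det_unitLowerBidiag, det_upperBidiag, one_mul, add_comm]

theorem eval_zero_det_submatrix_map_C_sub_X_smul_one {S : Type*} [CommRing S]
    {n k : ℕ} (M : Matrix (Fin n) (Fin n) S) (f g : Fin k → Fin n) :
    (((M.map (C : S →+* S[X]) - (X : S[X]) • 1).submatrix f g).det).eval 0 =
      (M.submatrix f g).det := by
  rw [← coe_evalRingHom, RingHom.map_det]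
  congr 1
  ext i j
  simp

end Matrix

section PeriodicJacobi

variable {K : Type*} [Field K]

theorem pJac_submatrix_dropLast (n : ℕ) (I V : ℕ → K) :
    (pJac K n I V).submatrix
        (fun k : Fin (n - 1) => (⟨(k : ℕ), by have := k.isLt; omega⟩ : Fin n))
        (fun k : Fin (n - 1) => (⟨(k : ℕ), by have := k.isLt; omega⟩ : Fin n)) =
      (Matrix.tridiagJacobi (n - 1) (fun i => I (i + 1))
        (fun i => if i = 0 then V n else V i)).map RatFunc.C := by
  ext i j
  have := i.isLt
  have := j.isLt
  simp only [pJac, Matrix.tridiagJacobi, Matrix.submatrix_apply, Matrix.map_apply,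
    Matrix.of_apply]
  split_ifs <;> first | rfl | omega | simp_all

theorem pJac_submatrix_dropFirstLast (n : ℕ) (I V : ℕ → K) :
    (pJac K n I V).submatrix
        (fun k : Fin (n - 2) => (⟨(k : ℕ) + 1, by have := k.isLt; omega⟩ : Fin n))
        (fun k : Fin (n - 2) => (⟨(k : ℕ) + 1, by have := k.isLt; omega⟩ : Fin n)) =
      (Matrix.tridiagJacobi (n - 2) (fun i => I (i + 1 + 1)) (fun i => V (i + 1))).map
        RatFunc.C := by
  ext i j
  have := i.isLt
  have := j.isLt
  simp only [pJac, Matrix.tridiagJacobi, Matrix.submatrix_apply, Matrix.map_apply,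
    Matrix.of_apply]
  split_ifs <;> first | rfl | omega | simp_all

theorem uPoly_eval_zero (n : ℕ) (I V : ℕ → K) :
    (uPoly K n I V).eval 0 = (-1) ^ (n - 1) * RatFunc.C (Matrix.tridiagJacobi (n - 1)
      (fun i => I (i + 1)) (fun i => if i = 0 then V n else V i)).det := by
  rw [uPoly, eval_mul, charMat, Matrix.eval_zero_det_submatrix_map_C_sub_X_smul_one,
    pJac_submatrix_dropLast]
  simp [RingHom.map_det]

theorem vPoly_eval_zero (n : ℕ) (I V : ℕ → K) :
    (vPoly K n I V).eval 0 = (-1) ^ (n - 1) * RatFunc.C (I n * V n) *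
      RatFunc.C
        (Matrix.tridiagJacobi (n - 2) (fun i => I (i + 1 + 1)) (fun i => V (i + 1))).det := by
  rw [vPoly, eval_mul, charMat, Matrix.eval_zero_det_submatrix_map_C_sub_X_smul_one,
    pJac_submatrix_dropFirstLast]
  simp [RingHom.map_det]

end PeriodicJacobi

/-- Lemma 2.11 of the paper: `(−1)ⁿ I₁ ⋯ Iₙ − v(0) = −Iₙ · u(0)`. -/
theorem stmt_13 {K : Type*} [Field K] (n : ℕ) (hn : 3 ≤ n) (I V : ℕ → K) :
    RatFunc.C ((-1 : K) ^ n * ∏ i ∈ Finset.Icc 1 n, I i) -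
        (vPoly K n I V).eval 0 =
      -RatFunc.C (I n) * (uPoly K n I V).eval 0 := by
  obtain ⟨m, rfl⟩ : ∃ m, n = m + 2 := ⟨n - 2, by omega⟩
  have hprod : ∏ i ∈ Finset.Icc 1 (m + 2), I i = ∏ i ∈ Finset.range (m + 2), I (i + 1) := by
    rw [← Finset.Ico_add_one_right_eq_Icc, Finset.prod_Ico_eq_prod_range]
    simp [add_comm]
  rw [uPoly_eval_zero, vPoly_eval_zero, show m + 2 - 1 = m + 1 from rfl,
    show m + 2 - 2 = m from rfl, Matrix.det_tridiagJacobi_succ, hprod, Finset.prod_range_succ]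
  simp only [Nat.add_eq_zero_iff, one_ne_zero, and_false, if_false, if_true]
  simp only [map_mul, map_add, map_pow, map_neg, map_one]
  ring
end

section
/- Let $K$ be a field, $n \geq 3$, and $I_1, \dots, I_n, V_1, \dots, V_n \in K$. Over $K(z)$, let $\mathcal{L} = L(z) - x E_n$ be the characteristic matrix of the periodic Jacobi matrix. Then $\det(\mathcal{L}_{1,n}) = 1 + (-1)^n (I_n V_n / z) \det({}^1\mathcal{L}_1)$, where $\mathcal{L}_{1,n}$ is obtained by deleting the first column and last row of $\mathcal{L}$, and ${}^1\mathcal{L}_1$ by deleting the first and last rows and columns. -/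
open Polynomial

/-
Expand `𝓛_{1,n}` along its first row, i.e. row `1` of `𝓛` without its first column. Its only
nonzero entries are the superdiagonal `1` and the corner `IₙVₙ/z`. Deleting the column of the `1`
leaves a lower unitriangular matrix, because the superdiagonal of `𝓛` becomes its diagonal;
deleting the column of the corner leaves exactly `¹𝓛₁`.
-/

theorem Matrix.det_eq_of_row_zero_supported_first_last {R : Type*} [CommRing R] {m : ℕ}
    (A : Matrix (Fin (m + 2)) (Fin (m + 2)) R) (h : ∀ j : Fin m, A 0 j.castSucc.succ = 0) :
    A.det = A 0 0 * (A.submatrix Fin.succ Fin.succ).det +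
      (-1) ^ (m + 1) * A 0 (Fin.last _) * (A.submatrix Fin.succ Fin.castSucc).det := by
  rw [det_succ_row_zero, Fin.sum_univ_succ, Fin.sum_univ_castSucc]
  simp [h, Fin.succ_last, Fin.succAbove_last]

section charMat

variable {K : Type*} [Field K] {n : ℕ} (I V : ℕ → K)

theorem charMat_apply_of_succ_eq {i j : Fin n} (h : (i : ℕ) + 1 = j) :
    charMat K n I V i j = 1 := by
  have hij : i ≠ j := fun e => by subst e; omega
  simp [charMat, pJac, hij, h, show (i : ℕ) ≠ j by omega]

theorem charMat_apply_of_succ_lt {i j : Fin n} (h : (i : ℕ) + 1 < j) :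
    charMat K n I V i j =
      if (i : ℕ) = 0 ∧ (j : ℕ) = n - 1 then C (RatFunc.C (I n * V n) / RatFunc.X) else 0 := by
  have hij : i ≠ j := fun e => by subst e; omega
  simp [charMat, pJac, hij, show (i : ℕ) ≠ j by omega,
    show (i : ℕ) + 1 ≠ j by omega, show (j : ℕ) + 1 ≠ i by omega, show (j : ℕ) ≠ 0 by omega]
  split_ifs <;> simp

theorem det_charMat_submatrix_superdiagonal (m : ℕ) :
    ((charMat K (m + 3) I V).submatrix
      (fun k : Fin (m + 1) => (⟨k + 1, by omega⟩ : Fin (m + 3)))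
      (fun k : Fin (m + 1) => (⟨k + 2, by omega⟩ : Fin (m + 3)))).det = 1 := by
  rw [Matrix.det_of_isLowerTriangular]
  · exact Finset.prod_eq_one fun a _ => charMat_apply_of_succ_eq I V rfl
  · intro a b hab
    rw [Matrix.submatrix_apply, charMat_apply_of_succ_lt I V (by simp at hab ⊢; omega),
      if_neg (by simp)]

end charMat

/-- Identity (2.16) of the paper:
`det 𝓛_{1,n} = 1 + (−1)ⁿ (IₙVₙ/z) det(¹𝓛₁)`, where `𝓛_{1,n}` deletes the first column
and the last row, and `¹𝓛₁` deletes the first and last rows and columns. -/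
theorem stmt_16 {K : Type*} [Field K] (n : ℕ) (hn : 3 ≤ n) (I V : ℕ → K) :
    ((charMat K n I V).submatrix
        (fun k : Fin (n - 1) => (⟨(k : ℕ), by have := k.isLt; omega⟩ : Fin n))
        (fun k : Fin (n - 1) => (⟨(k : ℕ) + 1, by have := k.isLt; omega⟩ : Fin n))).det
      = 1 + (-1) ^ n * C (RatFunc.C (I n * V n) / RatFunc.X) *
          ((charMat K n I V).submatrix
            (fun k : Fin (n - 2) => (⟨(k : ℕ) + 1, by have := k.isLt; omega⟩ : Fin n))
            (fun k : Fin (n - 2) => (⟨(k : ℕ) + 1, by have := k.isLt; omega⟩ : Fin n))).det := by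
  obtain ⟨m, rfl⟩ : ∃ m, n = m + 3 := ⟨n - 3, by omega⟩
  have h00 : charMat K (m + 3) I V ⟨0, by omega⟩ ⟨1, by omega⟩ = 1 :=
    charMat_apply_of_succ_eq I V rfl
  have h0last : charMat K (m + 3) I V ⟨0, by omega⟩ ⟨m + 2, by omega⟩ =
      C (RatFunc.C (I (m + 3) * V (m + 3)) / RatFunc.X) := by
    rw [charMat_apply_of_succ_lt I V (by simp)]; simp
  rw [Matrix.det_eq_of_row_zero_supported_first_last]
  · simp only [Matrix.submatrix_submatrix, Function.comp_def, Matrix.submatrix_apply,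
      Fin.val_succ, Fin.val_castSucc, Fin.val_zero, Fin.val_last, add_assoc, Nat.reduceAdd]
    rw [h00, h0last, det_charMat_submatrix_superdiagonal, one_mul,
      show (-1 : (RatFunc K)[X]) ^ (m + 3) = (-1) ^ (m + 1) by ring]
    -- the two minors differ only in their index types `Fin (m + 1)` and `Fin (m + 3 - 2)`
    rfl
  · intro j
    simp only [Matrix.submatrix_apply]
    rw [charMat_apply_of_succ_lt I V (by simp), if_neg (by simp; omega)]
end

section
/- Let $K$ be a field, $n \geq 3$, and $I_1, \dots, I_n, V_1, \dots, V_n \in K$ with all $I_i \neq 0$. Define the tridiagonal $(n-1) \times (n-1)$ matrices over $K[x]$: $A$ with diagonal $(V_1 - x, I_2 + V_2 - x, \dots, I_{n-1} + V_{n-1} - x)$, superdiagonal all $1$, subdiagonal $(I_2 V_1, I_3 V_2, \dots, I_{n-1} V_{n-2})$; and $B$ with diagonal $(I_2 + V_1 - x, I_3 + V_2 - x, \dots, I_{n-1} + V_{n-2} - x, V_{n-1} - x)$, superdiagonal all $1$, subdiagonal $(I_2 V_2, \dots, I_{n-1} V_{n-1})$. Then $\det A = \det B$. -/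
open Polynomial

section Aux
variable {R : Type*} [CommRing R] (m : ℕ) (u c : ℕ → R)

/-- unit lower bidiagonal matrix -/
def lbd : Matrix (Fin m) (Fin m) R :=
  Matrix.of fun i j => if (i : ℕ) = j then 1 else if (j : ℕ) + 1 = i then c j else 0

/-- upper bidiagonal matrix with superdiagonal 1 -/
def ubd : Matrix (Fin m) (Fin m) R :=
  Matrix.of fun i j => if (i : ℕ) = j then u i else if (i : ℕ) + 1 = j then 1 else 0

lemma lbd_mul_ubd :
    lbd m c * ubd m u =
      tridiag m (fun i => u i + if i = 0 then 0 else c (i - 1)) (fun j => c j * u j) := by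
  ext i j
  rw [Matrix.mul_apply]
  rcases Nat.eq_zero_or_pos (i : ℕ) with h0 | h0
  · rw [Finset.sum_eq_single i ?side ?nm]
    case side =>
      intro k _ hk
      have h1 : (k : ℕ) ≠ i := fun h => hk (Fin.ext h)
      simp only [lbd, Matrix.of_apply]
      rw [if_neg (by omega), if_neg (by omega), zero_mul]
    case nm => simp
    simp only [lbd, ubd, tridiag, Matrix.of_apply, h0, if_true]
    split_ifs <;> first | rfl | omega | (exfalso; assumption) | (simp; done)
  · have hi1 : (i : ℕ) - 1 < m := by omega
    set i' : Fin m := ⟨(i : ℕ) - 1, hi1⟩ with hi'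
    have hii' : (i' : ℕ) = (i : ℕ) - 1 := rfl
    have hne : i ≠ i' := by
      intro h; apply_fun (Fin.val) at h; rw [hii'] at h; omega
    rw [Finset.sum_eq_add_of_mem i i' (Finset.mem_univ _) (Finset.mem_univ _) hne ?side]
    case side =>
      intro k _ hk
      have h1 : (k : ℕ) ≠ i := fun h => hk.1 (Fin.ext h)
      have h2 : (k : ℕ) + 1 ≠ (i : ℕ) := by
        intro h; exact hk.2 (Fin.ext (by rw [hii']; omega))
      simp only [lbd, Matrix.of_apply]
      rw [if_neg (by omega), if_neg h2, zero_mul]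
    simp only [lbd, ubd, tridiag, Matrix.of_apply, hii']
    split_ifs <;>
      first
        | rfl | omega | ring1
        | (rw [show ((i : ℕ) - 1 : ℕ) = (j : ℕ) from by omega]; try ring1)
        | (exfalso; assumption)
        | (simp_all; done)

lemma ubd_mul_lbd :
    ubd m u * lbd m c =
      tridiag m (fun i => u i + if i = m - 1 then 0 else c i) (fun j => u (j + 1) * c j) := by
  ext i j
  rw [Matrix.mul_apply]
  rcases Nat.lt_or_ge ((i : ℕ) + 1) m with h0 | h0
  · set i' : Fin m := ⟨(i : ℕ) + 1, h0⟩ with hi'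
    have hii' : (i' : ℕ) = (i : ℕ) + 1 := rfl
    have hne : i ≠ i' := by
      intro h; apply_fun (Fin.val) at h; rw [hii'] at h; omega
    rw [Finset.sum_eq_add_of_mem i i' (Finset.mem_univ _) (Finset.mem_univ _) hne ?side]
    case side =>
      intro k _ hk
      have h1 : (i : ℕ) ≠ k := fun h => hk.1 (Fin.ext h.symm)
      have h2 : (i : ℕ) + 1 ≠ (k : ℕ) := by
        intro h; exact hk.2 (Fin.ext (by rw [hii']; omega))
      simp only [ubd, Matrix.of_apply]
      rw [if_neg h1, if_neg h2, zero_mul]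
    simp only [lbd, ubd, tridiag, Matrix.of_apply, hii']
    split_ifs <;>
      first
        | rfl | omega | ring1
        | (rw [show ((i : ℕ) + 1 : ℕ) = (j : ℕ) + 1 from by omega]; try ring1)
        | (exfalso; assumption)
        | (simp_all; done)
  · rw [Finset.sum_eq_single i ?side ?nm]
    case side =>
      intro k _ hk
      have h1 : (i : ℕ) ≠ k := fun h => hk (Fin.ext h.symm)
      have h2 : (i : ℕ) + 1 ≠ (k : ℕ) := by have := k.isLt; omega
      simp only [ubd, Matrix.of_apply]
      rw [if_neg h1, if_neg h2, zero_mul]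
    case nm => simp
    simp only [lbd, ubd, tridiag, Matrix.of_apply]
    have him : (i : ℕ) = m - 1 := by have := i.isLt; omega
    have hjm : (j : ℕ) < m := j.isLt
    split_ifs <;> first | rfl | omega | ring1 | (exfalso; assumption) | (rw [show ((i : ℕ) : ℕ) = (j : ℕ) + 1 from by omega]; try ring1) | (simp; done)

lemma det_lbd : (lbd m c).det = 1 := by
  rw [Matrix.det_of_lowerTriangular]
  · simp [lbd, Matrix.diag]
  · intro i j hij
    simp only [OrderDual.toDual_lt_toDual] at hij
    have : (i : ℕ) < j := hij
    simp only [lbd, Matrix.of_apply]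
    rw [if_neg (by omega), if_neg (by omega)]

lemma tridiag_sub_smul_one (d c : ℕ → R) (r : R) :
    tridiag m d c - r • (1 : Matrix (Fin m) (Fin m) R) = tridiag m (fun i => d i - r) c := by
  ext i j
  simp only [tridiag, Matrix.sub_apply, Matrix.smul_apply, Matrix.one_apply, Matrix.of_apply,
    smul_eq_mul]
  by_cases h : i = j
  · subst h; simp
  · have : (i : ℕ) ≠ j := fun hh => h (Fin.ext hh)
    simp only [if_neg this, if_neg h, mul_zero, sub_zero]

lemma tridiag_ext (d d' c c' : ℕ → R) (hd : ∀ i < m, d i = d' i)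
    (hc : ∀ j, j + 1 < m → c j = c' j) : tridiag m d c = tridiag m d' c' := by
  ext i j
  simp only [tridiag, Matrix.of_apply]
  split_ifs with h1 h2 h3
  · exact hd i i.isLt
  · rfl
  · exact hc j (by have := i.isLt; omega)
  · rfl

lemma tridiag_det_eq (r : R) :
    (tridiag m (fun i => (u i + if i = 0 then 0 else c (i - 1)) - r)
      (fun j => c j * u j)).det =
    (tridiag m (fun i => (u i + if i = m - 1 then 0 else c i) - r)
      (fun j => u (j + 1) * c j)).det := by
  rw [← tridiag_sub_smul_one, ← tridiag_sub_smul_one, ← lbd_mul_ubd, ← ubd_mul_lbd]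
  have key : (lbd m c * ubd m u - r • 1) * lbd m c = lbd m c * (ubd m u * lbd m c - r • 1) := by
    rw [sub_mul, mul_sub, mul_assoc, Matrix.smul_mul, Matrix.mul_smul, one_mul, mul_one]
  have h := congrArg Matrix.det key
  rwa [Matrix.det_mul, Matrix.det_mul, det_lbd, mul_one, one_mul] at h

end Aux

/-- Identity (2.31) in the cyclic-structure proposition of the paper: over `K[x]`,
the `(n−1) × (n−1)` tridiagonal matrices
`A` with diagonal `(V₁−x, I₂+V₂−x, …, Iₙ₋₁+Vₙ₋₁−x)`, subdiagonal `(I₂V₁, …, Iₙ₋₁Vₙ₋₂)`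
and `B` with diagonal `(I₂+V₁−x, …, Iₙ₋₁+Vₙ₋₂−x, Vₙ₋₁−x)`, subdiagonal `(I₂V₂, …, Iₙ₋₁Vₙ₋₁)`
(both with superdiagonal all `1`) have the same determinant. -/
theorem stmt_17 {K : Type*} [Field K] (n : ℕ) (hn : 3 ≤ n) (I V : ℕ → K)
    (hI : ∀ i ∈ Finset.Icc 1 n, I i ≠ 0) :
    (tridiag (n - 1)
      (fun i => if i = 0 then C (V 1) - X else C (I (i + 1) + V (i + 1)) - X)
      (fun j => C (I (j + 2) * V (j + 1)))).det =
    (tridiag (n - 1)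
      (fun i => if i = n - 2 then C (V (n - 1)) - X else C (I (i + 2) + V (i + 1)) - X)
      (fun j => C (I (j + 2) * V (j + 2)))).det := by
  set m := n - 1 with hm
  set u : ℕ → K[X] := fun i => C (V (i + 1)) with hu
  set c : ℕ → K[X] := fun j => C (I (j + 2)) with hc
  have e1 : tridiag m
      (fun i => if i = 0 then C (V 1) - X else C (I (i + 1) + V (i + 1)) - X)
      (fun j => C (I (j + 2) * V (j + 1))) =
      tridiag m (fun i => (u i + if i = 0 then 0 else c (i - 1)) - X)
        (fun j => c j * u j) := by
    apply tridiag_ext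
    · intro i _
      rcases Nat.eq_zero_or_pos i with rfl | hi
      · simp [hu]
      · have h2 : i - 1 + 2 = i + 1 := by omega
        rw [if_neg (by omega), if_neg (by omega), hu, hc]
        simp only [h2, map_add]
        ring
    · intro j _
      rw [hu, hc, map_mul]
  have e2 : tridiag m
      (fun i => if i = n - 2 then C (V (n - 1)) - X else C (I (i + 2) + V (i + 1)) - X)
      (fun j => C (I (j + 2) * V (j + 2))) =
      tridiag m (fun i => (u i + if i = m - 1 then 0 else c i) - X)
        (fun j => u (j + 1) * c j) := by
    apply tridiag_ext
    · intro i _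
      rcases eq_or_ne i (n - 2) with rfl | hi
      · rw [if_pos rfl, if_pos (by omega), hu]
        simp only [add_zero]
        rw [show n - 2 + 1 = n - 1 from by omega]
      · rw [if_neg hi, if_neg (by omega), hu, hc, map_add]
        ring
    · intro j _
      rw [hu, hc, map_mul]
      ring
  rw [e1, e2]
  exact tridiag_det_eq m u c X
end
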